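/- (Decomposition, almost-stable case) Let C be an almost-sᵢ-stable set of transpositions: sᵢ ∈ C and there is a unique transposition τ with τ ∈ C but sᵢτsᵢ ∉ C; set C₋ = C \ {τ} and C₊ = C ∪ {sᵢτsᵢ}, which are sᵢ-stable. If τ = (i ↔ k), then H_C = H_{C₊}^{∗sᵢ} ⊕ (xᵢ − xₖ)·H_{C₋}^{∗sᵢ} as an internal direct sum of ℂ[t₁,…,tₙ]-submodules; if τ = (i+1 ↔ k), then H_C = H_{C₊}^{∗sᵢ} ⊕ (xₖ − x_{i+1})·H_{C₋}^{∗sᵢ}. -/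

import Mathlib

open MvPolynomial

/-- The ring `H = Fun(Sₙ, ℂ[t₁,…,tₙ])`, with pointwise operations. -/
abbrev Hr (n : ℕ) := Equiv.Perm (Fin n) → MvPolynomial (Fin n) ℂ

/-- The element `xᵢ ∈ H`, given by `v ↦ t_{v(i)}`. -/
noncomputable def xH {n : ℕ} (i : Fin n) : Hr n := fun v => X (v i)

/-- The element `tᵢ ∈ H`, the constant function `v ↦ tᵢ`. -/
noncomputable def tH {n : ℕ} (i : Fin n) : Hr n := fun _ => X i

/-- The right star action on `H`: `(g ∗ w)(v) = g(v w⁻¹)`. -/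
noncomputable def starH {n : ℕ} (g : Hr n) (w : Equiv.Perm (Fin n)) : Hr n :=
  fun v => g (v * w⁻¹)

/-- The left dot action on `H`:
`(w · g)(v; t₁,…,tₙ) = g(w⁻¹ v; t_{w(1)},…,t_{w(n)})`. -/
noncomputable def dotH {n : ℕ} (w : Equiv.Perm (Fin n)) (g : Hr n) : Hr n :=
  fun v => rename (⇑w) (g (w⁻¹ * v))


/-- `f` satisfies the divisibility condition `τ` for a transposition `τ = (j ↔ k)`:
`f − f∗τ` is a multiple of `xⱼ − xₖ` in `H` (i.e. pointwise, with quotients in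
`ℂ[t₁,…,tₙ]`). -/
def condP {n : ℕ} (τ : Equiv.Perm (Fin n)) (f : Hr n) : Prop :=
  ∀ j k : Fin n, τ = Equiv.swap j k → (xH j - xH k) ∣ (f - starH f τ)

/-- The subring `H_C` of elements satisfying all conditions in a set `C` of
transpositions. -/
def HCset {n : ℕ} (C : Set (Equiv.Perm (Fin n))) : Set (Hr n) :=
  {f | ∀ τ ∈ C, condP τ f}

/-!
Write `s = swap a b`, `δ = x_a - x_b`, and let `F` be the factor of the statement, so that
`F ∗ s = F - δ`. Since `s ∈ C`, `f - f ∗ s = δ q`; this `q` is `s`-invariant, and because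
`C₋` is `s`-stable and `δ` is coprime to every other `x_j - x_k`, it lies in `H_{C₋}`. Then
`g = f - F q` is `s`-invariant and satisfies the `τ`-condition (as `F q` does), hence also
the `sτs`-condition. Applying `∗ s` to two decompositions `g + F q = g' + F q'` gives
`δ q = δ q'`, and `δ` is not a zero divisor.
-/

open Equiv

namespace MvPolynomial

variable {R ι : Type*} [CommRing R] [DecidableEq ι]

theorem X_sub_X_dvd_sub_rename_update (p q : ι) (P : MvPolynomial ι R) :
    X p - X q ∣ P - rename (Function.update id p q) P := by
  set g := Function.update id p q
  induction P using MvPolynomial.induction_on with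
  | C r => simp
  | add P Q hP hQ =>
    rw [map_add, add_sub_add_comm]
    exact dvd_add hP hQ
  | mul_X P i hP =>
    have hi : X p - X q ∣ (X i - X (g i) : MvPolynomial ι R) := by
      rcases eq_or_ne i p with rfl | hip
      · simp [g]
      · simp [g, hip]
    rw [map_mul, rename_X, show P * X i - rename g P * X (g i)
      = (P - rename g P) * X i + rename g P * (X i - X (g i)) by ring]
    exact dvd_add (hP.mul_right _) (hi.mul_left _)

theorem X_sub_X_dvd_of_dvd_X_sub_X_mul [IsDomain R] {p q r s : ι} (hrs : r ≠ s)
    (hne : s(r, s) ≠ s(p, q)) {P : MvPolynomial ι R} (h : X p - X q ∣ (X r - X s) * P) :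
    X p - X q ∣ P := by
  have hsub := X_sub_X_dvd_sub_rename_update (R := R) p q P
  set g := Function.update id p q
  obtain ⟨c, hc⟩ := h
  -- `rename g` kills `X p - X q` but not `X r - X s`
  have hgrs : g r ≠ g s := by
    simp only [g, Function.update_apply, id]
    rw [Ne, Sym2.eq_iff] at hne
    split_ifs <;> grind
  have hzero : rename g ((X r - X s) * P) = 0 := by
    simp [hc, g, Function.update_apply]
  rw [map_mul, map_sub, rename_X, rename_X, mul_eq_zero] at hzero
  rwa [hzero.resolve_left (sub_ne_zero.2 (X_injective.ne hgrs)), sub_zero] at hsub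

end MvPolynomial

section

variable {n : ℕ}

@[simp] theorem starH_add (f g : Hr n) (w : Perm (Fin n)) :
    starH (f + g) w = starH f w + starH g w := rfl

@[simp] theorem starH_sub (f g : Hr n) (w : Perm (Fin n)) :
    starH (f - g) w = starH f w - starH g w := rfl

@[simp] theorem starH_mul (f g : Hr n) (w : Perm (Fin n)) :
    starH (f * g) w = starH f w * starH g w := rfl

@[simp] theorem starH_starH (f : Hr n) (w u : Perm (Fin n)) :
    starH (starH f w) u = starH f (w * u) := by
  funext v
  simp [starH, mul_assoc]

@[simp] theorem starH_one (f : Hr n) : starH f 1 = f := by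
  funext v
  simp [starH]

@[simp] theorem starH_xH (i : Fin n) (w : Perm (Fin n)) : starH (xH i) w = xH (w⁻¹ i) := rfl

theorem starH_dvd_starH {d f : Hr n} (w : Perm (Fin n)) (h : d ∣ f) :
    starH d w ∣ starH f w := by
  obtain ⟨c, rfl⟩ := h
  exact ⟨starH c w, rfl⟩

theorem xH_sub_xH_dvd_xH_sub_xH_swap (j k i : Fin n) :
    xH j - xH k ∣ xH i - xH (swap j k i) := by
  rcases eq_or_ne i j with rfl | hij
  · simp
  rcases eq_or_ne i k with rfl | hik
  · rw [swap_apply_right]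
    exact dvd_sub_comm.1 dvd_rfl
  · simp [swap_apply_of_ne_of_ne hij hik]

theorem isLeftRegular_xH_sub_xH {a b : Fin n} (hab : a ≠ b) : IsLeftRegular (xH a - xH b) :=
  fun _ _ h => funext fun v =>
    mul_left_cancel₀ (sub_ne_zero.2 (X_injective.ne (v.injective.ne hab))) (congrFun h v)

theorem xH_sub_xH_dvd_of_dvd_xH_sub_xH_mul {a b j k : Fin n} (hab : a ≠ b)
    (hne : swap j k ≠ swap a b) {c : Hr n} (h : xH j - xH k ∣ (xH a - xH b) * c) :
    xH j - xH k ∣ c := by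
  rw [pi_dvd_iff] at h ⊢
  intro v
  refine X_sub_X_dvd_of_dvd_X_sub_X_mul (v.injective.ne hab) ?_ (h v)
  rw [Ne, Sym2.eq_iff]
  rintro (⟨ha, hb⟩ | ⟨ha, hb⟩)
  · exact hne (by rw [v.injective ha, v.injective hb])
  · exact hne (by rw [v.injective ha, v.injective hb, swap_comm])

theorem starH_eq_of_sub_starH_eq_mul {a b : Fin n} (hab : a ≠ b) {f q : Hr n}
    (h : f - starH f (swap a b) = (xH a - xH b) * q) : starH q (swap a b) = q := by
  have h' := congrArg (starH · (swap a b)) h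
  simp only [starH_sub, starH_mul, starH_starH, swap_mul_self, starH_one, starH_xH, swap_inv,
    swap_apply_left, swap_apply_right] at h'
  exact isLeftRegular_xH_sub_xH hab (by linear_combination h + h')

theorem condP_of_not_isSwap {σ : Perm (Fin n)} (hσ : ¬σ.IsSwap) (f : Hr n) : condP σ f := by
  intro j k h
  obtain rfl : j = k := by_contra fun hjk => hσ ⟨j, k, hjk, h⟩
  simp [h, ← Perm.one_def]

theorem condP_sub {σ : Perm (Fin n)} {f g : Hr n} (hf : condP σ f) (hg : condP σ g) :
    condP σ (f - g) := by
  intro j k h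
  rw [starH_sub, sub_sub_sub_comm]
  exact dvd_sub (hf j k h) (hg j k h)

theorem condP_mul {σ : Perm (Fin n)} {f g : Hr n} (hf : condP σ f) (hg : condP σ g) :
    condP σ (f * g) := by
  intro j k h
  rw [starH_mul, show f * g - starH f σ * starH g σ
    = f * (g - starH g σ) + (f - starH f σ) * starH g σ by ring]
  exact dvd_add ((hg j k h).mul_left f) ((hf j k h).mul_right _)

theorem condP_xH (σ : Perm (Fin n)) (i : Fin n) : condP σ (xH i) := by
  rintro j k rfl
  simpa using xH_sub_xH_dvd_xH_sub_xH_swap j k i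

theorem condP_swap_xH_sub_xH_mul (c d : Fin n) (r : Hr n) :
    condP (swap c d) ((xH c - xH d) * r) := by
  intro j k h
  have hF : xH j - xH k ∣ xH c - xH d := by
    simpa [← h] using xH_sub_xH_dvd_xH_sub_xH_swap j k c
  have hFs : starH (xH c - xH d) (swap c d) = -(xH c - xH d) := by simp
  rw [starH_mul, hFs, show (xH c - xH d) * r - -(xH c - xH d) * starH r (swap c d)
    = (xH c - xH d) * (r + starH r (swap c d)) by ring]
  exact hF.mul_right _

theorem condP_starH {σ : Perm (Fin n)} {f : Hr n} (h : condP σ f) (w : Perm (Fin n)) :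
    condP (w⁻¹ * σ * w) (starH f w) := by
  intro j k hjk
  have hσ : σ = swap (w j) (w k) := by
    rw [swap_apply_apply, ← hjk]
    group
  simpa [mul_assoc] using starH_dvd_starH w (h _ _ hσ)

theorem condP_swap_conj {a b : Fin n} {σ : Perm (Fin n)} {g : Hr n}
    (hg : starH g (swap a b) = g) (h : condP σ g) : condP (swap a b * σ * swap a b) g := by
  simpa [hg] using condP_starH h (swap a b)

theorem condP_of_condP_xH_sub_xH_mul {a b : Fin n} (hab : a ≠ b) {σ : Perm (Fin n)}
    (hσ : σ ≠ swap a b) {q : Hr n} (h : condP σ ((xH a - xH b) * q)) : condP σ q := by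
  intro j k hjk
  refine xH_sub_xH_dvd_of_dvd_xH_sub_xH_mul hab (hjk ▸ hσ) ?_
  have hδ := condP_sub (condP_xH σ a) (condP_xH σ b) j k hjk
  rw [show (xH a - xH b) * (q - starH q σ)
    = ((xH a - xH b) * q - starH ((xH a - xH b) * q) σ)
      - (xH a - xH b - starH (xH a - xH b) σ) * starH q σ by rw [starH_mul]; ring]
  exact dvd_sub (h j k hjk) (hδ.mul_right _)

theorem mem_HCset_of_sub_starH_eq_mul {a b : Fin n} (hab : a ≠ b) {D : Set (Perm (Fin n))}
    (hD : ∀ σ ∈ D, σ.IsSwap → swap a b * σ * swap a b ∈ D) {f q : Hr n}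
    (hf : f ∈ HCset D) (hfq : f - starH f (swap a b) = (xH a - xH b) * q) : q ∈ HCset D := by
  intro σ hσD
  by_cases hσs : σ = swap a b
  · rintro j k -
    simp [hσs, starH_eq_of_sub_starH_eq_mul hab hfq]
  by_cases hσ : σ.IsSwap
  · have hfs : condP σ (starH f (swap a b)) := by
      simpa [mul_assoc] using condP_starH (hf _ (hD σ hσD hσ)) (swap a b)
    exact condP_of_condP_xH_sub_xH_mul hab hσs (hfq ▸ condP_sub (hf σ hσD) hfs)
  · exact condP_of_not_isSwap hσ q

theorem swap_conj_mem_diff {a b : Fin n} {C : Set (Perm (Fin n))} {τ σ : Perm (Fin n)}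
    (hτout : swap a b * τ * swap a b ∉ C)
    (huniq : ∀ τ' ∈ C, τ'.IsSwap → swap a b * τ' * swap a b ∉ C → τ' = τ)
    (hσ : σ ∈ C \ {τ}) (hσswap : σ.IsSwap) : swap a b * σ * swap a b ∈ C \ {τ} := by
  refine ⟨by_contra fun h => hσ.2 (huniq σ hσ.1 hσswap h), fun h => hτout ?_⟩
  rw [← Set.mem_singleton_iff.1 h]
  simpa [mul_assoc] using hσ.1

theorem eq_of_add_mul_eq_add_mul {a b : Fin n} (hab : a ≠ b) {F g g' q q' : Hr n}
    (hF : starH F (swap a b) = F - (xH a - xH b)) (hg : starH g (swap a b) = g)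
    (hg' : starH g' (swap a b) = g') (hq : starH q (swap a b) = q)
    (hq' : starH q' (swap a b) = q') (h : g + F * q = g' + F * q') : g = g' ∧ q = q' := by
  have hs := congrArg (starH · (swap a b)) h
  simp only [starH_add, starH_mul, hF, hg, hg', hq, hq'] at hs
  have hqq : q = q' := isLeftRegular_xH_sub_xH hab (by linear_combination h - hs)
  exact ⟨by linear_combination h - F * hqq, hqq⟩

theorem existsUnique_decomposition {a b c d : Fin n} (hab : a ≠ b) {C : Set (Perm (Fin n))}
    (hs : swap a b ∈ C) {τ : Perm (Fin n)} (hτcd : τ = swap c d) (hτC : τ ∈ C)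
    (hτout : swap a b * τ * swap a b ∉ C)
    (huniq : ∀ τ' ∈ C, τ'.IsSwap → swap a b * τ' * swap a b ∉ C → τ' = τ)
    (hF : starH (xH c - xH d) (swap a b) = xH c - xH d - (xH a - xH b))
    {f : Hr n} (hf : f ∈ HCset C) :
    ∃! p : Hr n × Hr n,
      (p.1 ∈ HCset (C ∪ {swap a b * τ * swap a b}) ∧ starH p.1 (swap a b) = p.1) ∧
      (p.2 ∈ HCset (C \ {τ}) ∧ starH p.2 (swap a b) = p.2) ∧
      f = p.1 + (xH c - xH d) * p.2 := by
  obtain ⟨q, hfq⟩ := hf _ hs a b rfl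
  have hqs : starH q (swap a b) = q := starH_eq_of_sub_starH_eq_mul hab hfq
  have hq : q ∈ HCset (C \ {τ}) :=
    mem_HCset_of_sub_starH_eq_mul hab (fun σ hσ => swap_conj_mem_diff hτout huniq hσ)
      (fun σ hσ => hf σ hσ.1) hfq
  set g := f - (xH c - xH d) * q
  have hgs : starH g (swap a b) = g := by
    simp only [g, starH_sub, starH_mul, hF, hqs]
    linear_combination -hfq
  have hgC : g ∈ HCset C := by
    intro σ hσ
    by_cases hστ : σ = τ
    · exact condP_sub (hf σ hσ) (hστ.trans hτcd ▸ condP_swap_xH_sub_xH_mul c d q)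
    · exact condP_sub (hf σ hσ)
        (condP_mul (condP_sub (condP_xH σ c) (condP_xH σ d)) (hq σ ⟨hσ, hστ⟩))
  have hgC' : g ∈ HCset (C ∪ {swap a b * τ * swap a b}) := by
    rintro σ (hσ | hσ)
    · exact hgC σ hσ
    · rw [Set.mem_singleton_iff.1 hσ]
      exact condP_swap_conj hgs (hgC τ hτC)
  refine ⟨(g, q), ⟨⟨hgC', hgs⟩, ⟨hq, hqs⟩, by simp [g]⟩, ?_⟩
  rintro ⟨g', q'⟩ ⟨⟨-, hg's⟩, ⟨-, hq's⟩, hf'⟩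
  obtain ⟨hg', hq'⟩ := eq_of_add_mul_eq_add_mul hab hF hg's hgs hq's hqs
    (hf'.symm.trans (by simp [g]))
  exact Prod.ext hg' hq'

end

theorem almost_stable_decomposition_general (n : ℕ) (a b : Fin n)
    (C : Set (Equiv.Perm (Fin n)))
    (hs : Equiv.swap a b ∈ C)
    (τ : Equiv.Perm (Fin n)) (hτC : τ ∈ C)
    (hτout : Equiv.swap a b * τ * Equiv.swap a b ∉ C)
    (huniq : ∀ τ' ∈ C, Equiv.Perm.IsSwap τ' →
      Equiv.swap a b * τ' * Equiv.swap a b ∉ C → τ' = τ)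
    (k : Fin n) :
    (τ = Equiv.swap a k →
      ∀ f ∈ HCset C, ∃! p : Hr n × Hr n,
        (p.1 ∈ HCset (C ∪ {Equiv.swap a b * τ * Equiv.swap a b}) ∧
          starH p.1 (Equiv.swap a b) = p.1) ∧
        (p.2 ∈ HCset (C \ {τ}) ∧ starH p.2 (Equiv.swap a b) = p.2) ∧
        f = p.1 + (xH a - xH k) * p.2) ∧
    (τ = Equiv.swap b k →
      ∀ f ∈ HCset C, ∃! p : Hr n × Hr n,
        (p.1 ∈ HCset (C ∪ {Equiv.swap a b * τ * Equiv.swap a b}) ∧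
          starH p.1 (Equiv.swap a b) = p.1) ∧
        (p.2 ∈ HCset (C \ {τ}) ∧ starH p.2 (Equiv.swap a b) = p.2) ∧
        f = p.1 + (xH k - xH b) * p.2) := by
  have hconj : swap a b * τ * swap a b ≠ τ := fun h => hτout (by rwa [h])
  have hab : a ≠ b := by
    rintro rfl
    rw [swap_self, ← Perm.one_def] at hconj
    simp at hconj
  constructor
  · rintro rfl f hf
    have hka : k ≠ a := by
      rintro rfl
      rw [swap_self, ← Perm.one_def] at hconj
      simp at hconj
    have hkb : k ≠ b := by
      rintro rfl
      simp at hconj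
    refine existsUnique_decomposition hab hs rfl hτC hτout huniq ?_ hf
    simp [swap_apply_of_ne_of_ne hka hkb]
  · rintro rfl f hf
    have hka : k ≠ a := by
      rintro rfl
      simp [swap_comm] at hconj
    have hkb : k ≠ b := by
      rintro rfl
      rw [swap_self, ← Perm.one_def] at hconj
      simp at hconj
    refine existsUnique_decomposition hab hs (swap_comm b k) hτC hτout huniq ?_ hf
    simp [swap_apply_of_ne_of_ne hka hkb]

/-- Decomposition, almost-stable case: let `C` be
almost-`s`-stable, `s = swap a b` with `b = a + 1`: `s ∈ C`, and `τ` is the unique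
transposition with `τ ∈ C` but `sτs ∉ C`.  Set `C₋ = C \ {τ}` and `C₊ = C ∪ {sτs}`.
If `τ = swap a k`, every `f ∈ HCset C` decomposes uniquely as
`f = g + (xH a - xH k) * h` with `g` in the `s`-fixed part of `HCset C₊` and `h` in
the `s`-fixed part of `HCset C₋`; if `τ = swap b k`, the decomposition is
`f = g + (xH k - xH b) * h`. -/
theorem almost_stable_decomposition (n : ℕ) (a b : Fin n) (hab : (a : ℕ) + 1 = b)
    (C : Set (Equiv.Perm (Fin n)))
    (hC : ∀ τ' ∈ C, Equiv.Perm.IsSwap τ')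
    (hs : Equiv.swap a b ∈ C)
    (τ : Equiv.Perm (Fin n)) (hτ : τ.IsSwap) (hτC : τ ∈ C)
    (hτout : Equiv.swap a b * τ * Equiv.swap a b ∉ C)
    (huniq : ∀ τ' ∈ C, Equiv.Perm.IsSwap τ' →
      Equiv.swap a b * τ' * Equiv.swap a b ∉ C → τ' = τ)
    (k : Fin n) :
    (τ = Equiv.swap a k →
      ∀ f ∈ HCset C, ∃! p : Hr n × Hr n,
        (p.1 ∈ HCset (C ∪ {Equiv.swap a b * τ * Equiv.swap a b}) ∧
          starH p.1 (Equiv.swap a b) = p.1) ∧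
        (p.2 ∈ HCset (C \ {τ}) ∧ starH p.2 (Equiv.swap a b) = p.2) ∧
        f = p.1 + (xH a - xH k) * p.2) ∧
    (τ = Equiv.swap b k →
      ∀ f ∈ HCset C, ∃! p : Hr n × Hr n,
        (p.1 ∈ HCset (C ∪ {Equiv.swap a b * τ * Equiv.swap a b}) ∧
          starH p.1 (Equiv.swap a b) = p.1) ∧
        (p.2 ∈ HCset (C \ {τ}) ∧ starH p.2 (Equiv.swap a b) = p.2) ∧
        f = p.1 + (xH k - xH b) * p.2) :=
  almost_stable_decomposition_general n a b C hs τ hτC hτout huniq k
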